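/- arXiv:2604.13850 — 6 statements merged into one kernel-verified Lean document; each statement's English description precedes it below -/
import Mathlib

section
/- If a graph G is triangle-free, then for every vertex u of the blow-up G[K_2] (where each vertex of G is replaced by two adjacent vertices, and two vertices in different copies are adjacent iff the corresponding original vertices are adjacent), the subgraph induced by the closed neighborhood of u is not 3-connected on at least five vertices; consequently G[K_2] contains neither W_5 nor W_6 as a subgraph. -/
open SimpleGraph

/-- `H` is contained in `G` as a subgraph. -/
def Contains {α β : Type*} (G : SimpleGraph α) (H : SimpleGraph β) : Prop :=
  ∃ f : H →g G, Function.Injective f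

/-- Every red/blue coloring of `K_N` (red = `C`, blue = `Cᶜ`) has a red `G` or blue `H`. -/
def RamseyProp {α β : Type*} (N : ℕ) (G : SimpleGraph α) (H : SimpleGraph β) : Prop :=
  ∀ C : SimpleGraph (Fin N), Contains C G ∨ Contains Cᶜ H

/-- The Ramsey number `R(G, H)`. -/
noncomputable def ramseyNumber {α β : Type*} (G : SimpleGraph α) (H : SimpleGraph β) : ℕ :=
  sInf {N | RamseyProp N G H}

/-- The join `G + H`: disjoint union plus all edges in between. -/
def graphJoin {α β : Type*} (G : SimpleGraph α) (H : SimpleGraph β) : SimpleGraph (α ⊕ β) :=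
  SimpleGraph.fromRel (fun x y =>
    match x, y with
    | Sum.inl a, Sum.inl b => G.Adj a b
    | Sum.inr a, Sum.inr b => H.Adj a b
    | _, _ => True)

/-- The wheel `W_n = K_1 + C_{n-1}` on `n` vertices. -/
def wheel (n : ℕ) : SimpleGraph (Fin 1 ⊕ Fin (n - 1)) :=
  graphJoin ⊥ (SimpleGraph.cycleGraph (n - 1))

/-- A perfect matching `k • K_2` on `2k` vertices. -/
def matching (k : ℕ) : SimpleGraph (Fin k × Fin 2) :=
  SimpleGraph.fromRel (fun x y => x.1 = y.1)

/-- The fan `F_k = K_1 + k • K_2`. -/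
def fan (k : ℕ) : SimpleGraph (Fin 1 ⊕ Fin k × Fin 2) :=
  graphJoin ⊥ (matching k)

/-- The kipas `K̂_n = K_1 + P_{n-1}` on `n` vertices. -/
def kipas (n : ℕ) : SimpleGraph (Fin 1 ⊕ Fin (n - 1)) :=
  graphJoin ⊥ (SimpleGraph.pathGraph (n - 1))

/-- The blow-up `G[K_2]`: each vertex replaced by an adjacent pair; vertices in
different pairs adjacent iff the original vertices are adjacent. -/
def blowUp {α : Type*} (G : SimpleGraph α) : SimpleGraph (α × Fin 2) :=
  SimpleGraph.fromRel (fun x y => x.1 = y.1 ∨ G.Adj x.1 y.1)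


/-- `G` is 3-connected: more than 3 vertices, and deleting any set of at most 2
vertices leaves a connected graph. -/
def ThreeConnected {V : Type*} (G : SimpleGraph V) : Prop :=
  3 < Nat.card V ∧ ∀ S : Set V, S.ncard ≤ 2 → (G.induce Sᶜ).Connected

/- ### Auxiliary lemmas -/

lemma triple4 (P : Fin 4 → Prop) (hP : ∀ k l, P k → P l → k = l) :
    ∃ x y z : Fin 4, (cycleGraph 4).Adj x y ∧ (cycleGraph 4).Adj y z ∧ x ≠ z ∧
      ¬P x ∧ ¬P y ∧ ¬P z := by
  by_cases h : ∃ k, P k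
  · obtain ⟨k0, hk0⟩ := h
    have hne : ∀ k : Fin 4, (k + 1 ≠ k ∧ k + 2 ≠ k ∧ k + 3 ≠ k) ∧
        (cycleGraph 4).Adj (k + 1) (k + 2) ∧ (cycleGraph 4).Adj (k + 2) (k + 3) ∧
        k + 1 ≠ k + 3 := by decide
    refine ⟨k0 + 1, k0 + 2, k0 + 3, (hne k0).2.1, (hne k0).2.2.1,
      (hne k0).2.2.2, fun hx => (hne k0).1.1 (hP _ _ hx hk0),
      fun hx => (hne k0).1.2.1 (hP _ _ hx hk0), fun hx => (hne k0).1.2.2 (hP _ _ hx hk0)⟩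
  · push_neg at h
    exact ⟨0, 1, 2, by decide, by decide, by decide, h 0, h 1, h 2⟩

lemma triple5 (P : Fin 5 → Prop) (hP : ∀ k l, P k → P l → k = l) :
    ∃ x y z : Fin 5, (cycleGraph 5).Adj x y ∧ (cycleGraph 5).Adj y z ∧ x ≠ z ∧
      ¬P x ∧ ¬P y ∧ ¬P z := by
  by_cases h : ∃ k, P k
  · obtain ⟨k0, hk0⟩ := h
    have hne : ∀ k : Fin 5, (k + 1 ≠ k ∧ k + 2 ≠ k ∧ k + 3 ≠ k) ∧
        (cycleGraph 5).Adj (k + 1) (k + 2) ∧ (cycleGraph 5).Adj (k + 2) (k + 3) ∧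
        k + 1 ≠ k + 3 := by decide
    refine ⟨k0 + 1, k0 + 2, k0 + 3, (hne k0).2.1, (hne k0).2.2.1,
      (hne k0).2.2.2, fun hx => (hne k0).1.1 (hP _ _ hx hk0),
      fun hx => (hne k0).1.2.1 (hP _ _ hx hk0), fun hx => (hne k0).1.2.2 (hP _ _ hx hk0)⟩
  · push_neg at h
    exact ⟨0, 1, 2, by decide, by decide, by decide, h 0, h 1, h 2⟩

lemma blowUp_adj {α : Type*} (G : SimpleGraph α) (x y : α × Fin 2) :
    (blowUp G).Adj x y ↔ x ≠ y ∧ (x.1 = y.1 ∨ G.Adj x.1 y.1) := by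
  simp only [blowUp, fromRel_adj]
  constructor
  · rintro ⟨h, (h2 | h2)⟩
    · exact ⟨h, h2⟩
    · rcases h2 with h2 | h2
      · exact ⟨h, Or.inl h2.symm⟩
      · exact ⟨h, Or.inr h2.symm⟩
  · rintro ⟨h, h2⟩
    exact ⟨h, Or.inl h2⟩

lemma fin2_other {i j : Fin 2} (h : i ≠ j) : j = i + 1 := by omega

lemma noWheel {V : Type*} (G : SimpleGraph V) (hG : G.CliqueFree 3) {m : ℕ}
    (hm : m = 4 ∨ m = 5)
    (f : graphJoin (⊥ : SimpleGraph (Fin 1)) (cycleGraph m) →g blowUp G)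
    (hf : Function.Injective f) : False := by
  classical
  set u := f (Sum.inl 0) with hu
  have hub : ∀ k : Fin m, (blowUp G).Adj u (f (Sum.inr k)) := by
    intro k
    exact f.map_adj (by simp [graphJoin] :
      (graphJoin (⊥ : SimpleGraph (Fin 1)) (cycleGraph m)).Adj (Sum.inl 0) (Sum.inr k))
  set P : Fin m → Prop := fun k => f (Sum.inr k) = (u.1, u.2 + 1) with hPdef
  have hP : ∀ k l, P k → P l → k = l := by
    intro k l hk hl
    have := hf (hk.trans hl.symm)
    simpa using this
  have hA : ∀ k, ¬ P k → G.Adj u.1 (f (Sum.inr k)).1 := by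
    intro k hk
    have h := (blowUp_adj G _ _).1 (hub k)
    rcases h.2 with he | ha
    · exfalso
      apply hk
      show f (Sum.inr k) = (u.1, u.2 + 1)
      have h2 : (f (Sum.inr k)).2 = u.2 + 1 :=
        fin2_other (fun hq => h.1 (Prod.ext_iff.mpr ⟨he, hq⟩))
      exact Prod.ext_iff.mpr ⟨he.symm, h2⟩
    · exact ha
  have pair : ∀ k l, (cycleGraph m).Adj k l → ¬P k → ¬P l →
      f (Sum.inr l) = ((f (Sum.inr k)).1, (f (Sum.inr k)).2 + 1) := by
    intro k l hkl hk hl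
    have hadj : (blowUp G).Adj (f (Sum.inr k)) (f (Sum.inr l)) :=
      f.map_adj (by simp [graphJoin, hkl, hkl.ne])
    have h := (blowUp_adj G _ _).1 hadj
    have heq : (f (Sum.inr k)).1 = (f (Sum.inr l)).1 := by
      rcases h.2 with he | ha
      · exact he
      · exact absurd (is3Clique_triple_iff.mpr ⟨hA k hk, hA l hl, ha⟩)
          (hG {u.1, (f (Sum.inr k)).1, (f (Sum.inr l)).1})
    exact Prod.ext_iff.mpr ⟨heq.symm,
      fin2_other (fun hq => h.1 (Prod.ext_iff.mpr ⟨heq, hq⟩))⟩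
  obtain ⟨x, y, z, hxy, hyz, hxz, hx, hy, hz⟩ :
      ∃ x y z : Fin m, (cycleGraph m).Adj x y ∧ (cycleGraph m).Adj y z ∧ x ≠ z ∧
        ¬P x ∧ ¬P y ∧ ¬P z := by
    rcases hm with rfl | rfl
    · exact triple4 P hP
    · exact triple5 P hP
  have h1 := pair y x hxy.symm hy hx
  have h2 := pair y z hyz hy hz
  exact hxz (Sum.inr_injective (hf (h1.trans h2.symm)))

lemma notThreeConn {V : Type*} (G : SimpleGraph V) (hG : G.CliqueFree 3) (u : V × Fin 2) :
    ¬ (5 ≤ Nat.card ↥((blowUp G).neighborSet u ∪ {u}) ∧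
        ThreeConnected ((blowUp G).induce ((blowUp G).neighborSet u ∪ {u}))) := by
  classical
  rintro ⟨h5, -, hconn⟩
  set N : Set (V × Fin 2) := (blowUp G).neighborSet u ∪ {u} with hN
  set a := u.1 with ha
  -- membership facts
  have hmem : ∀ x : ↥N, (x : V × Fin 2).1 ≠ a → G.Adj a (x : V × Fin 2).1 := by
    rintro ⟨x, hx | hx⟩ hne
    · rcases ((blowUp_adj G _ _).1 hx).2 with he | hadj
      · exact absurd he.symm hne
      · exact hadj
    · exact absurd (congrArg Prod.fst hx) hne
  -- there are two distinct neighbors of a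
  obtain ⟨b, c, hb, hc, hbc⟩ : ∃ b c, G.Adj a b ∧ G.Adj a c ∧ b ≠ c := by
    by_contra hcon
    push_neg at hcon
    have hinj : Function.Injective (fun x : ↥N =>
        ((if (x : V × Fin 2).1 = a then (0 : Fin 2) else 1), (x : V × Fin 2).2)) := by
      intro x y hxy
      simp only [Prod.mk.injEq] at hxy
      apply Subtype.ext
      apply Prod.ext_iff.mpr
      refine ⟨?_, hxy.2⟩
      by_cases hx : (x : V × Fin 2).1 = a <;> by_cases hy : (y : V × Fin 2).1 = a
      · exact hx.trans hy.symm
      · simp [hx, hy] at hxy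
      · simp [hx, hy] at hxy
      · exact hcon _ _ (hmem x hx) (hmem y hy)
    have := Nat.card_le_card_of_injective _ hinj
    simp only [Nat.card_eq_fintype_card, Fintype.card_prod, Fintype.card_fin] at this
    omega
  -- the separating set: the two copies of a
  set S : Set ↥N := {x | (x : V × Fin 2).1 = a} with hS
  have hScard : S.ncard ≤ 2 := by
    have hinj : Function.Injective (fun x : ↥S => (x : ↥N).1.2) := by
      intro x y h
      exact Subtype.ext (Subtype.ext (Prod.ext_iff.mpr ⟨x.2.trans y.2.symm, h⟩))
    have := Nat.card_le_card_of_injective _ hinj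
    rw [← Nat.card_coe_set_eq]
    simpa using this
  have hconn' := (hconn S hScard).preconnected
  -- the two vertices (b,0) and (c,0)
  have hadjb : (blowUp G).Adj u (b, 0) :=
    (blowUp_adj G _ _).2 ⟨fun h => hb.ne (congrArg Prod.fst h), Or.inr hb⟩
  have hadjc : (blowUp G).Adj u (c, 0) :=
    (blowUp_adj G _ _).2 ⟨fun h => hc.ne (congrArg Prod.fst h), Or.inr hc⟩
  set xb : ↥N := ⟨(b, 0), Or.inl hadjb⟩ with hxb
  set xc : ↥N := ⟨(c, 0), Or.inl hadjc⟩ with hxc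
  have hxbS : xb ∈ Sᶜ := fun h => hb.ne (Eq.symm h)
  have hxcS : xc ∈ Sᶜ := fun h => hc.ne (Eq.symm h)
  -- the invariant: adjacency in the reduced graph preserves the G-vertex
  have inv : ∀ w z : ↥(Sᶜ), (((blowUp G).induce N).induce Sᶜ).Adj w z →
      (w : ↥N).1.1 = (z : ↥N).1.1 := by
    intro w z hadj
    have h : (blowUp G).Adj (w : ↥N).1 (z : ↥N).1 := hadj
    rcases ((blowUp_adj G _ _).1 h).2 with he | hadj'
    · exact he
    · exfalso
      have hw : (w : ↥N).1.1 ≠ a := w.2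
      have hz : (z : ↥N).1.1 ≠ a := z.2
      exact hG {a, (w : ↥N).1.1, (z : ↥N).1.1}
        (is3Clique_triple_iff.mpr ⟨hmem _ hw, hmem _ hz, hadj'⟩)
  have key : ∀ w z : ↥(Sᶜ), (((blowUp G).induce N).induce Sᶜ).Reachable w z →
      (w : ↥N).1.1 = (z : ↥N).1.1 := by
    intro w z h
    obtain ⟨p⟩ := h
    induction p with
    | nil => rfl
    | cons h _ ih => exact (inv _ _ h).trans ih
  have := key ⟨xb, hxbS⟩ ⟨xc, hxcS⟩ (hconn' _ _)
  exact hbc this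

theorem stmt_0 {V : Type*} (G : SimpleGraph V) (hG : G.CliqueFree 3) :
    (∀ u : V × Fin 2,
      ¬ (5 ≤ Nat.card ↥((blowUp G).neighborSet u ∪ {u}) ∧
          ThreeConnected ((blowUp G).induce ((blowUp G).neighborSet u ∪ {u})))) ∧
    ¬ Contains (blowUp G) (wheel 5) ∧ ¬ Contains (blowUp G) (wheel 6) := by
  refine ⟨notThreeConn G hG, ?_, ?_⟩
  · rintro ⟨f, hf⟩
    exact noWheel G hG (m := 5 - 1) (Or.inl rfl) f hf
  · rintro ⟨f, hf⟩
    exact noWheel G hG (m := 6 - 1) (Or.inr rfl) f hf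
end

section
/- If a graph G contains no K_4 minus an edge as a subgraph, then the blow-up G[K_2] does not contain the wheel W_7 as a subgraph. -/
open SimpleGraph

/-- The graph `K_4 - e`. -/
def K4e : SimpleGraph (Fin 4) := (⊤ : SimpleGraph (Fin 4)).deleteEdges {s(0, 1)}

set_option linter.unusedTactic false
set_option linter.unreachableTactic false

lemma key {V : Type*} {G : SimpleGraph V} (hG : ¬ Contains G K4e) {x y u v : V}
    (hxy : G.Adj x y) (hux : G.Adj u x) (huy : G.Adj u y)
    (hvx : G.Adj v x) (hvy : G.Adj v y) : u = v := by
  by_contra huv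
  apply hG
  have hinj : Function.Injective ![u, v, x, y] := by
    intro i j hij
    fin_cases i <;> fin_cases j <;> simp_all <;>
      first
        | exact huv hij | exact huv hij.symm
        | exact hux.ne hij | exact hux.ne' hij.symm
        | exact huy.ne hij | exact huy.ne' hij.symm
        | exact hvx.ne hij | exact hvx.ne' hij.symm
        | exact hvy.ne hij | exact hvy.ne' hij.symm
        | exact hxy.ne hij | exact hxy.ne' hij.symm
  refine ⟨⟨![u, v, x, y], ?_⟩, hinj⟩
  intro i j hij
  fin_cases i <;> fin_cases j <;>
    simp_all [K4e, SimpleGraph.deleteEdges, Sym2.eq, Sym2.rel_iff'] <;>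
    first
      | exact hux | exact huy | exact hvx | exact hvy | exact hxy
      | exact hux.symm | exact huy.symm | exact hvx.symm | exact hvy.symm | exact hxy.symm

section CoreLemmas
variable {V : Type*} (G : SimpleGraph V)

lemma caseB (K : ∀ x y u v : V, G.Adj x y → G.Adj u x → G.Adj u y → G.Adj v x → G.Adj v y → u = v)
    (a : V) (b : Fin 6 → V)
    (H1 : ∀ k, b k = a ∨ G.Adj a (b k))
    (H2 : ∀ k, b k = b (k + 1) ∨ G.Adj (b k) (b (k + 1)))
    (H3 : ∀ i j l : Fin 6, i ≠ j → j ≠ l → i ≠ l → b i = b j → b j = b l → False)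
    (H4 : ∀ i j : Fin 6, i ≠ j → b i = a → b j = a → False)
    (h0 : b 0 = a) : False := by
  have hA : ∀ k : Fin 6, k ≠ 0 → G.Adj a (b k) :=
    fun k hk => (H1 k).resolve_left (fun h => H4 k 0 hk h h0)
  have a1 := hA 1 (by decide)
  have a2 := hA 2 (by decide)
  have a3 := hA 3 (by decide)
  have a4 := hA 4 (by decide)
  have a5 := hA 5 (by decide)
  have S : ∀ x p q : V, G.Adj a x → G.Adj p x → G.Adj q x → G.Adj a p → G.Adj a q → p = q :=
    fun x p q hax hpx hqx hap haq => K a x p q hax hap.symm hpx haq.symm hqx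
  have E : ∀ k : Fin 6, b k ≠ b (k + 1) → G.Adj (b k) (b (k + 1)) :=
    fun k h => (H2 k).resolve_left h
  have claim1 : b 1 ≠ b 3 := by
    intro h13
    have h12 : b 2 ≠ b 1 :=
      fun h => H3 1 2 3 (by decide) (by decide) (by decide) h.symm (h.trans h13)
    have h23 : b 2 ≠ b 3 := fun h => h12 (h.trans h13.symm)
    have h34 : b 3 ≠ b 4 := fun h => H3 1 3 4 (by decide) (by decide) (by decide) h13 h
    have h24 : b 2 = b 4 := S (b 3) (b 2) (b 4) a3 (E 2 h23) ((E 3 h34).symm) a2 a4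
    have h45 : b 4 ≠ b 5 := fun h => H3 2 4 5 (by decide) (by decide) (by decide) h24 h
    have h35 : b 3 = b 5 := S (b 4) (b 3) (b 5) a4 (E 3 h34) ((E 4 h45).symm) a3 a5
    exact H3 1 3 5 (by decide) (by decide) (by decide) h13 h35
  have claim2 : b 3 ≠ b 5 := by
    intro h35
    have h34 : b 3 ≠ b 4 :=
      fun h => H3 3 4 5 (by decide) (by decide) (by decide) h (h.symm.trans h35)
    have h23 : b 2 ≠ b 3 := fun h => H3 2 3 5 (by decide) (by decide) (by decide) h h35
    have h24 : b 2 = b 4 := S (b 3) (b 2) (b 4) a3 (E 2 h23) ((E 3 h34).symm) a2 a4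
    have h12 : b 1 ≠ b 2 := fun h => H3 1 2 4 (by decide) (by decide) (by decide) h h24
    have h13 : b 1 = b 3 := S (b 2) (b 1) (b 3) a2 (E 1 h12) ((E 2 h23).symm) a1 a3
    exact H3 1 3 5 (by decide) (by decide) (by decide) h13 h35
  by_cases h23 : b 2 = b 3
  · have h34 : b 3 ≠ b 4 := fun h => H3 2 3 4 (by decide) (by decide) (by decide) h23 h
    have h45 : b 4 = b 5 := by
      by_contra h45
      exact claim2 (S (b 4) (b 3) (b 5) a4 (E 3 h34) ((E 4 h45).symm) a3 a5)
    have h12 : b 1 ≠ b 2 := fun h => H3 1 2 3 (by decide) (by decide) (by decide) h h23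
    have h14 : b 1 = b 4 :=
      S (b 2) (b 1) (b 4) a2 (E 1 h12) (by rw [h23]; exact (E 3 h34).symm) a1 a4
    exact H3 1 4 5 (by decide) (by decide) (by decide) h14 h45
  · have h12 : b 1 = b 2 := by
      by_contra h12
      exact claim1 (S (b 2) (b 1) (b 3) a2 (E 1 h12) ((E 2 h23).symm) a1 a3)
    by_cases h34 : b 3 = b 4
    · have h45 : b 4 ≠ b 5 := fun h => claim2 (h34.trans h)
      have h25 : b 2 = b 5 :=
        S (b 3) (b 2) (b 5) a3 (E 2 h23) (by rw [h34]; exact (E 4 h45).symm) a2 a5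
      exact H3 1 2 5 (by decide) (by decide) (by decide) h12 h25
    · have h24 : b 2 = b 4 := S (b 3) (b 2) (b 4) a3 (E 2 h23) ((E 3 h34).symm) a2 a4
      exact H3 1 2 4 (by decide) (by decide) (by decide) h12 h24

lemma caseA (K : ∀ x y u v : V, G.Adj x y → G.Adj u x → G.Adj u y → G.Adj v x → G.Adj v y → u = v)
    (a : V) (b : Fin 6 → V)
    (hA : ∀ k, G.Adj a (b k))
    (H2 : ∀ k, b k = b (k + 1) ∨ G.Adj (b k) (b (k + 1)))
    (H3 : ∀ i j l : Fin 6, i ≠ j → j ≠ l → i ≠ l → b i = b j → b j = b l → False) : False := by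
  have S : ∀ x p q : V, G.Adj a x → G.Adj p x → G.Adj q x → G.Adj a p → G.Adj a q → p = q :=
    fun x p q hax hpx hqx hap haq => K a x p q hax hap.symm hpx haq.symm hqx
  have E : ∀ k : Fin 6, b k ≠ b (k + 1) → G.Adj (b k) (b (k + 1)) :=
    fun k h => (H2 k).resolve_left h
  have r11 : ∀ k : Fin 6, k + 1 + 1 = k + 2 := by decide
  have r12 : ∀ k : Fin 6, k + 1 + 2 = k + 3 := by decide
  have r51 : ∀ k : Fin 6, k + 5 + 1 = k := by decide
  have r52 : ∀ k : Fin 6, k + 5 + 2 = k + 1 := by decide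
  have A1 : ∀ k : Fin 6, b k ≠ b (k + 1) → b (k + 2) ≠ b (k + 1) → b k = b (k + 2) := by
    intro k h1 h2
    have e2 : G.Adj (b (k + 1)) (b (k + 2)) := by
      have := E (k + 1); rw [r11 k] at this; exact this (fun h => h2 h.symm)
    exact S (b (k + 1)) (b k) (b (k + 2)) (hA (k + 1)) (E k h1) e2.symm (hA k) (hA (k + 2))
  have A2 : ∀ k : Fin 6, b (k + 1) = b k ∨ b (k + 1) = b (k + 2) := by
    intro k
    by_contra hc
    push_neg at hc
    obtain ⟨h1, h2⟩ := hc
    have e02 : b k = b (k + 2) := A1 k (fun h => h1 h.symm) (fun h => h2 h.symm)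
    have A1k1 := A1 (k + 1)
    rw [r11 k, r12 k] at A1k1
    have h32 : b (k + 3) ≠ b (k + 2) := by
      intro h
      exact H3 k (k + 2) (k + 3) (fun h => absurd (add_left_cancel ((add_zero k).symm ▸ h : k + 0 = k + 2)) (by decide)) (fun h => absurd (add_left_cancel h) (by decide)) (fun h => absurd (add_left_cancel ((add_zero k).symm ▸ h : k + 0 = k + 3)) (by decide)) e02 h.symm
    have e13 : b (k + 1) = b (k + 3) := A1k1 h2 h32
    have A1k5 := A1 (k + 5)
    rw [r51 k, r52 k] at A1k5
    have h5k : b (k + 5) ≠ b k := by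
      intro h
      exact H3 (k + 5) k (k + 2) (fun h => absurd (add_left_cancel ((add_zero k).symm ▸ h : k + 5 = k + 0)) (by decide)) (fun h => absurd (add_left_cancel ((add_zero k).symm ▸ h : k + 0 = k + 2)) (by decide)) (fun h => absurd (add_left_cancel h) (by decide)) h e02
    have e51 : b (k + 5) = b (k + 1) := A1k5 h5k h1
    exact H3 (k + 5) (k + 1) (k + 3) (fun h => absurd (add_left_cancel h) (by decide))
      (fun h => absurd (add_left_cancel h) (by decide))
      (fun h => absurd (add_left_cancel h) (by decide)) e51 e13
  have hA20 : b 1 = b 0 ∨ b 1 = b 2 := A2 0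
  rcases hA20 with h01 | h12
  · have h12ne : b 1 ≠ b 2 :=
      fun h => H3 0 1 2 (by decide) (by decide) (by decide) h01.symm h
    have h23 : b 2 = b 3 :=
      ((A2 1 : b 2 = b 1 ∨ b 2 = b 3)).resolve_left (fun h => h12ne h.symm)
    have h34ne : b 3 ≠ b 4 :=
      fun h => H3 2 3 4 (by decide) (by decide) (by decide) h23 h
    have h45 : b 4 = b 5 :=
      ((A2 3 : b 4 = b 3 ∨ b 4 = b 5)).resolve_left (fun h => h34ne h.symm)
    have n50 : b 5 ≠ b 0 :=
      fun h => H3 5 0 1 (by decide) (by decide) (by decide) h h01.symm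
    have xy : G.Adj (b 0) (b 2) := by rw [← h01]; exact E 1 h12ne
    have yz : G.Adj (b 2) (b 4) := by rw [h23]; exact E 3 h34ne
    have zx : G.Adj (b 4) (b 0) := by rw [h45]; exact E 5 n50
    have : a = b 4 := K (b 0) (b 2) a (b 4) xy (hA 0) (hA 2) zx yz.symm
    exact (hA 4).ne this
  · have h23ne : b 2 ≠ b 3 :=
      fun h => H3 1 2 3 (by decide) (by decide) (by decide) h12 h
    have h34 : b 3 = b 4 :=
      ((A2 2 : b 3 = b 2 ∨ b 3 = b 4)).resolve_left (fun h => h23ne h.symm)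
    have h45ne : b 4 ≠ b 5 :=
      fun h => H3 3 4 5 (by decide) (by decide) (by decide) h34 h
    have h50 : b 5 = b 0 :=
      ((A2 4 : b 5 = b 4 ∨ b 5 = b 0)).resolve_left (fun h => h45ne h.symm)
    have h01ne : b 0 ≠ b 1 :=
      fun h => H3 5 0 1 (by decide) (by decide) (by decide) h50 h
    have xy : G.Adj (b 1) (b 3) := by rw [h12]; exact E 2 h23ne
    have yz : G.Adj (b 3) (b 5) := by rw [h34]; exact E 4 h45ne
    have zx : G.Adj (b 5) (b 1) := by rw [h50]; exact E 0 h01ne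
    have : a = b 5 := K (b 1) (b 3) a (b 5) xy (hA 1) (hA 3) zx yz.symm
    exact (hA 5).ne this

lemma core (K : ∀ x y u v : V, G.Adj x y → G.Adj u x → G.Adj u y → G.Adj v x → G.Adj v y → u = v)
    (a : V) (b : Fin 6 → V)
    (H1 : ∀ k, b k = a ∨ G.Adj a (b k))
    (H2 : ∀ k, b k = b (k + 1) ∨ G.Adj (b k) (b (k + 1)))
    (H3 : ∀ i j l : Fin 6, i ≠ j → j ≠ l → i ≠ l → b i = b j → b j = b l → False)
    (H4 : ∀ i j : Fin 6, i ≠ j → b i = a → b j = a → False) : False := by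
  by_cases hEx : ∃ j, b j = a
  · obtain ⟨j, hj⟩ := hEx
    refine caseB G K a (fun k => b (k + j)) (fun k => H1 (k + j)) ?_ ?_ ?_ ?_
    · intro k
      have := H2 (k + j)
      rwa [show k + j + 1 = k + 1 + j from add_right_comm k j 1] at this
    · intro i j' l hij hjl hil h1 h2
      exact H3 (i + j) (j' + j) (l + j) (fun h => hij (add_right_cancel h))
        (fun h => hjl (add_right_cancel h)) (fun h => hil (add_right_cancel h)) h1 h2
    · intro i j' hij h1 h2
      exact H4 (i + j) (j' + j) (fun h => hij (add_right_cancel h)) h1 h2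
    · show b (0 + j) = a
      rwa [zero_add]
  · push_neg at hEx
    exact caseA G K a b (fun k => (H1 k).resolve_left (hEx k)) H2 H3

end CoreLemmas

theorem stmt_1 {V : Type*} (G : SimpleGraph V) (hG : ¬ Contains G K4e) :
    ¬ Contains (blowUp G) (wheel 7) := by
  rintro ⟨f, hf⟩
  have badj : ∀ p q : V × Fin 2, (blowUp G).Adj p q → p.1 = q.1 ∨ G.Adj p.1 q.1 := by
    intro p q h
    rw [blowUp, fromRel_adj] at h
    rcases h.2 with (h | h) | (h | h)
    exacts [Or.inl h, Or.inr h, Or.inl h.symm, Or.inr h.symm]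
  have W1 : ∀ k : Fin 6, (wheel 7).Adj (Sum.inl 0) (Sum.inr k) := by
    intro k; simp [wheel, graphJoin, fromRel_adj]
  have W2 : ∀ k : Fin 6, (wheel 7).Adj (Sum.inr k) (Sum.inr (k + 1)) := by
    intro k; simp [wheel, graphJoin, fromRel_adj, cycleGraph_adj]
  set a : V := (f (Sum.inl 0)).1 with ha
  set b : Fin 6 → V := fun k => (f (Sum.inr k)).1 with hb
  have pig : ∀ s t u : Fin 2, s = t ∨ t = u ∨ s = u := by decide
  have H1 : ∀ k, b k = a ∨ G.Adj a (b k) := by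
    intro k
    rcases badj _ _ (f.map_adj (W1 k)) with h | h
    exacts [Or.inl h.symm, Or.inr h]
  have H2 : ∀ k, b k = b (k + 1) ∨ G.Adj (b k) (b (k + 1)) :=
    fun k => badj _ _ (f.map_adj (W2 k))
  have H3 : ∀ i j l : Fin 6, i ≠ j → j ≠ l → i ≠ l → b i = b j → b j = b l → False := by
    intro i j l hij hjl hil h1 h2
    rcases pig (f (Sum.inr i)).2 (f (Sum.inr j)).2 (f (Sum.inr l)).2 with h | h | h
    · exact hij (Sum.inr_injective (hf (Prod.ext h1 h)))
    · exact hjl (Sum.inr_injective (hf (Prod.ext h2 h)))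
    · exact hil (Sum.inr_injective (hf (Prod.ext (h1.trans h2) h)))
  have H4 : ∀ i j : Fin 6, i ≠ j → b i = a → b j = a → False := by
    intro i j hij h1 h2
    rcases pig (f (Sum.inr i)).2 (f (Sum.inr j)).2 (f (Sum.inl 0)).2 with h | h | h
    · exact hij (Sum.inr_injective (hf (Prod.ext (h1.trans h2.symm) h)))
    · exact Sum.inl_ne_inr (hf (Prod.ext h2 h)).symm
    · exact Sum.inl_ne_inr (hf (Prod.ext h1 h)).symm
  exact core G (fun x y u v h1 h2 h3 h4 h5 => key hG h1 h2 h3 h4 h5) a b H1 H2 H3 H4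
end

section
/- Let G be the graph on 7 vertices consisting of a 7-cycle v_1v_2...v_7v_1 together with the three chords v_2v_5, v_3v_6, v_4v_7. Then the complement of the blow-up G[K_2] (a graph on 14 vertices) does not contain the wheel W_7 as a subgraph. -/
open SimpleGraph

/-- The 7-cycle together with the chords v₂v₅, v₃v₆, v₄v₇
(vertex vᵢ is indexed by i - 1). -/
def G7 : SimpleGraph (Fin 7) :=
  SimpleGraph.cycleGraph 7 ⊔ SimpleGraph.fromEdgeSet {s(1, 4), s(2, 5), s(3, 6)}

section Aux

/-- Boolean adjacency of `G7`. -/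
def gadj7 (i j : Fin 7) : Bool :=
  (i - j).val = 1 || (j - i).val = 1 ||
  ((i,j) ∈ [((1:Fin 7),(4:Fin 7)),(4,1),(2,5),(5,2),(3,6),(6,3)])

/-- Boolean adjacency of the complement of `G7` (the "blue" graph on original vertices). -/
def cadj7 (i j : Fin 7) : Bool := i != j && !(gadj7 i j)

/-- "Not all three equal". -/
def T7 (x y z : Fin 7) : Bool := !(x == z && y == z)

lemma G7_adj_iff (i j : Fin 7) : G7.Adj i j ↔ gadj7 i j = true := by
  simp only [G7, sup_adj, cycleGraph_adj, fromEdgeSet_adj, Set.mem_insert_iff,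
    Set.mem_singleton_iff, Sym2.eq, Sym2.rel_iff', Prod.mk.injEq, Prod.swap_prod_mk,
    gadj7, Bool.or_eq_true, decide_eq_true_eq, List.mem_cons, List.mem_singleton,
    List.not_mem_nil, or_false]
  constructor
  · rintro (h | ⟨h, hne⟩)
    · exact Or.inl (by simpa [Fin.ext_iff] using h)
    · refine Or.inr ?_
      rcases h with (h|h)|(h|h)|(h|h) <;> simp_all
  · rintro (h | h)
    · exact Or.inl (by simpa [Fin.ext_iff] using h)
    · refine Or.inr ⟨?_, ?_⟩ <;> fin_cases i <;> fin_cases j <;> simp_all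

lemma comp_adj7 {x y : Fin 7 × Fin 2} (h : (blowUp G7)ᶜ.Adj x y) : cadj7 x.1 y.1 = true := by
  rw [compl_adj] at h
  obtain ⟨hne, hnadj⟩ := h
  rw [blowUp, fromRel_adj] at hnadj
  push_neg at hnadj
  have h2 := hnadj hne
  obtain ⟨⟨h1, h3⟩, _⟩ := h2
  simp only [cadj7, Bool.and_eq_true, bne_iff_ne, ne_eq, Bool.not_eq_true',
    Bool.not_eq_true]
  exact ⟨h1, by rw [← Bool.not_eq_true, ← G7_adj_iff]; exact h3⟩

lemma wheel7_hub (i : Fin 6) : (wheel 7).Adj (Sum.inl 0) (Sum.inr i) := by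
  refine (SimpleGraph.fromRel_adj _ _ _).2 ⟨by simp, Or.inl ?_⟩
  exact trivial

lemma wheel7_cyc (i : Fin 6) : (wheel 7).Adj (Sum.inr i) (Sum.inr (i + 1)) := by
  refine (SimpleGraph.fromRel_adj _ _ _).2 ⟨?_, Or.inl ?_⟩
  · simp only [ne_eq, Sum.inr.injEq]
    revert i; decide
  · show (SimpleGraph.cycleGraph 6).Adj i (i + 1)
    revert i; decide

set_option maxRecDepth 10000 in
set_option synthInstance.maxSize 2000 in
set_option synthInstance.maxHeartbeats 1000000 in
lemma key7 : ∀ u a : Fin 7, cadj7 u a = true →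
  ∀ b, cadj7 u b = true → cadj7 a b = true →
  ∀ c, cadj7 u c = true → cadj7 b c = true → T7 a b c = true →
  ∀ d, cadj7 u d = true → cadj7 c d = true → T7 a b d = true → T7 a c d = true →
    T7 b c d = true →
  ∀ e, cadj7 u e = true → cadj7 d e = true → T7 a b e = true → T7 a c e = true →
    T7 a d e = true → T7 b c e = true → T7 b d e = true → T7 c d e = true →
  ∀ f, cadj7 u f = true → cadj7 e f = true → cadj7 f a = true →
    T7 a b f = true → T7 a c f = true → T7 a d f = true → T7 a e f = true →
    T7 b c f = true → T7 b d f = true → T7 b e f = true →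
    T7 c d f = true → T7 c e f = true → T7 d e f = true → False := by decide

end Aux

theorem stmt_2 : ¬ Contains (blowUp G7)ᶜ (wheel 7) := by
  rintro ⟨f, hf⟩
  set u : Fin 7 := (f (Sum.inl 0)).1 with hu
  set v : Fin 6 → Fin 7 := fun i => (f (Sum.inr i)).1 with hv
  have hhub : ∀ i : Fin 6, cadj7 u (v i) = true := fun i => comp_adj7 (f.map_adj (wheel7_hub i))
  have hnext : ∀ i : Fin 6, cadj7 (v i) (v (i + 1)) = true :=
    fun i => comp_adj7 (f.map_adj (wheel7_cyc i))
  have htri : ∀ i j k : Fin 6, i ≠ j → i ≠ k → j ≠ k → T7 (v i) (v j) (v k) = true := by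
    intro i j k hij hik hjk
    rw [T7, Bool.not_eq_true', Bool.and_eq_false_iff]
    by_contra h
    push_neg at h
    obtain ⟨h1, h2⟩ := h
    rw [ne_eq, Bool.not_eq_false, beq_iff_eq] at h1 h2
    have hpig : ∀ a b c : Fin 2, a = b ∨ a = c ∨ b = c := by decide
    rcases hpig (f (Sum.inr i)).2 (f (Sum.inr j)).2 (f (Sum.inr k)).2 with h3 | h3 | h3
    · exact hij (Sum.inr_injective (hf (Prod.ext (h1.trans h2.symm) h3)))
    · exact hik (Sum.inr_injective (hf (Prod.ext h1 h3)))
    · exact hjk (Sum.inr_injective (hf (Prod.ext h2 h3)))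
  have e0 : (0 : Fin 6) + 1 = 1 := by decide
  have e1 : (1 : Fin 6) + 1 = 2 := by decide
  have e2 : (2 : Fin 6) + 1 = 3 := by decide
  have e3 : (3 : Fin 6) + 1 = 4 := by decide
  have e4 : (4 : Fin 6) + 1 = 5 := by decide
  have e5 : (5 : Fin 6) + 1 = 0 := by decide
  exact key7 u (v 0) (hhub 0)
    (v 1) (hhub 1) (e0 ▸ hnext 0)
    (v 2) (hhub 2) (e1 ▸ hnext 1) (htri 0 1 2 (by decide) (by decide) (by decide))
    (v 3) (hhub 3) (e2 ▸ hnext 2)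
      (htri 0 1 3 (by decide) (by decide) (by decide))
      (htri 0 2 3 (by decide) (by decide) (by decide))
      (htri 1 2 3 (by decide) (by decide) (by decide))
    (v 4) (hhub 4) (e3 ▸ hnext 3)
      (htri 0 1 4 (by decide) (by decide) (by decide))
      (htri 0 2 4 (by decide) (by decide) (by decide))
      (htri 0 3 4 (by decide) (by decide) (by decide))
      (htri 1 2 4 (by decide) (by decide) (by decide))
      (htri 1 3 4 (by decide) (by decide) (by decide))
      (htri 2 3 4 (by decide) (by decide) (by decide))
    (v 5) (hhub 5) (e4 ▸ hnext 4) (e5 ▸ hnext 5)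
      (htri 0 1 5 (by decide) (by decide) (by decide))
      (htri 0 2 5 (by decide) (by decide) (by decide))
      (htri 0 3 5 (by decide) (by decide) (by decide))
      (htri 0 4 5 (by decide) (by decide) (by decide))
      (htri 1 2 5 (by decide) (by decide) (by decide))
      (htri 1 3 5 (by decide) (by decide) (by decide))
      (htri 1 4 5 (by decide) (by decide) (by decide))
      (htri 2 3 5 (by decide) (by decide) (by decide))
      (htri 2 4 5 (by decide) (by decide) (by decide))
      (htri 3 4 5 (by decide) (by decide) (by decide))
end

section
/- The Ramsey number R(W_5, W_7) is at least 15; that is, there exists a red-blue edge-coloring of K_14 with no red W_5 and no blue W_7. -/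
/-!
The coloring is the blow-up `G[K₂]` of the 7-cycle `G` with chords `v₂v₅, v₃v₆, v₄v₇`. A wheel
is a hub together with a cycle in its neighbourhood, so a red `W₅` (blue `W₇`) is a vertex and a
red 4-cycle (blue 6-cycle) among its red (blue) neighbours; an exhaustive search over the 14
vertices finds neither. Since `ramseyNumber` is an `sInf`, the lower bound also needs some
`RamseyProp N` to hold, which the Erdős–Szekeres argument gives for `N = 2 ^ (5 + 7)`.
-/

open SimpleGraph

section Ramsey

variable {α β : Type*} {G : SimpleGraph α} {H : SimpleGraph β}

lemma contains_iff_isContained {V : Type*} {C : SimpleGraph V} : Contains C G ↔ G ⊑ C :=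
  ⟨fun ⟨f, hf⟩ => ⟨⟨f, hf⟩⟩, fun ⟨f⟩ => ⟨f.toHom, f.injective⟩⟩

lemma ramseyProp_iff {N : ℕ} :
    RamseyProp N G H ↔ ∀ C : SimpleGraph (Fin N), G ⊑ C ∨ H ⊑ Cᶜ := by
  simp only [RamseyProp, contains_iff_isContained]

lemma isContained_or_isContained_compl_of_embedding {V W : Type*} {C : SimpleGraph V}
    {C' : SimpleGraph W} (e : C ↪g C') (h : G ⊑ C ∨ H ⊑ Cᶜ) : G ⊑ C' ∨ H ⊑ C'ᶜ :=
  h.imp (·.trans e.isContained) (·.trans (Embedding.complEquiv e).isContained)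

lemma RamseyProp.mono {N M : ℕ} (hNM : N ≤ M) (hN : RamseyProp N G H) : RamseyProp M G H := by
  rw [ramseyProp_iff] at hN ⊢
  exact fun C => isContained_or_isContained_compl_of_embedding
    (Embedding.comap (Fin.castLEEmb hNM) C) (hN _)

lemma not_ramseyProp_card {V : Type*} [Fintype V] (C : SimpleGraph V) (hG : G.Free C)
    (hH : H.Free Cᶜ) : ¬ RamseyProp (Fintype.card V) G H := by
  rw [ramseyProp_iff]
  intro hR
  have := isContained_or_isContained_compl_of_embedding
    (Embedding.comap (Fintype.equivFin V).symm.toEmbedding C) (hR _)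
  tauto

lemma le_ramseyNumber {N M : ℕ} (hM : RamseyProp M G H) (hN : ¬ RamseyProp N G H) :
    N + 1 ≤ ramseyNumber G H := by
  by_contra! hlt
  have hmem : RamseyProp (ramseyNumber G H) G H :=
    Nat.sInf_mem (s := {N | RamseyProp N G H}) ⟨M, hM⟩
  exact hN (hmem.mono (by omega))

lemma SimpleGraph.IsNClique.insert_of_subset_filter_adj {V : Type*} [DecidableEq V]
    {C : SimpleGraph V} [DecidableRel C.Adj] {S A : Finset V} {v : V} {s : ℕ}
    (hC : C.IsNClique s A) (hv : v ∈ S) (hA : A ⊆ (S.erase v).filter (C.Adj v)) :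
    insert v A ⊆ S ∧ C.IsNClique (s + 1) (insert v A) := by
  refine ⟨Finset.insert_subset hv fun w hw => ?_, hC.insert fun w hw => ?_⟩
  · exact Finset.mem_of_mem_erase ((Finset.mem_filter.1 (hA hw)).1)
  · exact (Finset.mem_filter.1 (hA hw)).2

lemma card_filter_adj_add_card_filter_compl_adj {V : Type*} [DecidableEq V] (C : SimpleGraph V)
    [DecidableRel C.Adj] (S : Finset V) (v : V) :
    ((S.erase v).filter (C.Adj v)).card + ((S.erase v).filter (Cᶜ.Adj v)).card =
      (S.erase v).card := by
  have hcompl : (S.erase v).filter (Cᶜ.Adj v) = (S.erase v).filter (¬ C.Adj v ·) :=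
    Finset.filter_congr fun w hw => by simp [(Finset.ne_of_mem_erase hw).symm]
  rw [hcompl, Finset.card_filter_add_card_filter_not]

theorem exists_isNClique_or_isNClique_compl {V : Type*} [DecidableEq V] :
    ∀ (C : SimpleGraph V) (S : Finset V) (s t : ℕ), 2 ^ (s + t) ≤ S.card →
      ∃ A ⊆ S, C.IsNClique s A ∨ Cᶜ.IsNClique t A
  | _, _, 0, _, _ => ⟨∅, Finset.empty_subset _, .inl (isNClique_empty.2 rfl)⟩
  | _, _, _ + 1, 0, _ => ⟨∅, Finset.empty_subset _, .inr (isNClique_empty.2 rfl)⟩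
  | C, S, s + 1, t + 1, hS => by
    classical
    obtain ⟨v, hv⟩ : S.Nonempty := Finset.card_pos.1 (lt_of_lt_of_le (by positivity) hS)
    have hcard := card_filter_adj_add_card_filter_compl_adj C S v
    rw [Finset.card_erase_of_mem hv] at hcard
    have hsub (p : V → Prop) [DecidablePred p] : (S.erase v).filter p ⊆ S :=
      (Finset.filter_subset _ _).trans (Finset.erase_subset _ _)
    rcases le_or_gt (2 ^ (s + (t + 1))) ((S.erase v).filter (C.Adj v)).card with hN | hN
    · obtain ⟨A, hA, hA' | hA'⟩ := exists_isNClique_or_isNClique_compl C _ s (t + 1) hN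
      · obtain ⟨hAS, hclique⟩ := hA'.insert_of_subset_filter_adj hv hA
        exact ⟨_, hAS, .inl hclique⟩
      · exact ⟨A, hA.trans (hsub _), .inr hA'⟩
    · have hM : 2 ^ (t + (s + 1)) ≤ ((S.erase v).filter (Cᶜ.Adj v)).card := by
        have h2 : 2 ^ (s + 1 + (t + 1)) = 2 ^ (s + (t + 1)) + 2 ^ (t + (s + 1)) := by ring
        omega
      obtain ⟨A, hA, hA' | hA'⟩ := exists_isNClique_or_isNClique_compl Cᶜ _ t (s + 1) hM
      · obtain ⟨hAS, hclique⟩ := hA'.insert_of_subset_filter_adj hv hA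
        exact ⟨_, hAS, .inr hclique⟩
      · rw [compl_compl] at hA'
        exact ⟨A, hA.trans (hsub _), .inl hA'⟩
termination_by _ _ s t => s + t

lemma SimpleGraph.IsContained.of_not_cliqueFree [Fintype α] {V : Type*} {C : SimpleGraph V}
    (h : ¬ C.CliqueFree (Fintype.card α)) : G ⊑ C :=
  (IsContained.of_le le_top).trans (not_free.1 (cliqueFree_iff_top_free.not.1 h))

lemma ramseyProp_two_pow [Fintype α] [Fintype β] :
    RamseyProp (2 ^ (Fintype.card α + Fintype.card β)) G H := by
  rw [ramseyProp_iff]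
  intro C
  obtain ⟨A, -, hA⟩ := exists_isNClique_or_isNClique_compl C Finset.univ
    (Fintype.card α) (Fintype.card β) (by simp)
  exact hA.imp (fun hA => .of_not_cliqueFree (· A hA)) (fun hA => .of_not_cliqueFree (· A hA))

end Ramsey

section Wheel

variable {n : ℕ} {V : Type*} {G : SimpleGraph V}

lemma wheel_adj_hub (i : Fin (n - 1)) : (wheel n).Adj (.inl 0) (.inr i) :=
  (fromRel_adj _ _ _).2 ⟨Sum.inl_ne_inr, .inl trivial⟩

lemma wheel_adj_rim {i j : Fin (n - 1)} (h : (cycleGraph (n - 1)).Adj i j) :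
    (wheel n).Adj (.inr i) (.inr j) :=
  (fromRel_adj _ _ _).2 ⟨Sum.inr_injective.ne h.ne, .inl h⟩

-- The conjuncts are ordered so that the `decide` searches below prune as early as possible.
lemma exists_hub_fourCycle_of_wheel_five_isContained (hW : wheel 5 ⊑ G) :
    ∃ h a, G.Adj h a ∧ ∃ b, G.Adj h b ∧ G.Adj a b ∧
      ∃ c, c ≠ a ∧ G.Adj h c ∧ G.Adj b c ∧
      ∃ d, d ≠ b ∧ G.Adj h d ∧ G.Adj c d ∧ G.Adj d a := by
  obtain ⟨φ⟩ := hW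
  have hub (i) := φ.toHom.map_adj (wheel_adj_hub (n := 5) i)
  have rim {i j} (h) := φ.toHom.map_adj (wheel_adj_rim (n := 5) (i := i) (j := j) h)
  have ne {i j : Fin 4} (h : i ≠ j) : φ (.inr i) ≠ φ (.inr j) :=
    φ.injective.ne (Sum.inr_injective.ne h)
  exact ⟨_, _, hub 0, _, hub 1, rim (by decide), _, ne (by decide), hub 2, rim (by decide),
    _, ne (by decide), hub 3, rim (by decide), rim (by decide)⟩

lemma exists_hub_sixCycle_of_wheel_seven_isContained (hW : wheel 7 ⊑ G) :
    ∃ h a, G.Adj h a ∧ ∃ b, G.Adj h b ∧ G.Adj a b ∧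
      ∃ c, c ≠ a ∧ G.Adj h c ∧ G.Adj b c ∧
      ∃ d, d ≠ a ∧ d ≠ b ∧ G.Adj h d ∧ G.Adj c d ∧
      ∃ e, e ≠ a ∧ e ≠ b ∧ e ≠ c ∧ G.Adj h e ∧ G.Adj d e ∧
      ∃ f, f ≠ b ∧ f ≠ c ∧ f ≠ d ∧ G.Adj h f ∧ G.Adj e f ∧ G.Adj f a := by
  obtain ⟨φ⟩ := hW
  have hub (i) := φ.toHom.map_adj (wheel_adj_hub (n := 7) i)
  have rim {i j} (h) := φ.toHom.map_adj (wheel_adj_rim (n := 7) (i := i) (j := j) h)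
  have ne {i j : Fin 6} (h : i ≠ j) : φ (.inr i) ≠ φ (.inr j) :=
    φ.injective.ne (Sum.inr_injective.ne h)
  exact ⟨_, _, hub 0, _, hub 1, rim (by decide), _, ne (by decide), hub 2, rim (by decide),
    _, ne (by decide), ne (by decide), hub 3, rim (by decide),
    _, ne (by decide), ne (by decide), ne (by decide), hub 4, rim (by decide),
    _, ne (by decide), ne (by decide), ne (by decide), hub 5, rim (by decide), rim (by decide)⟩

end Wheel

/-- The vertices `v₁, …, v₇` of the paper are `0, …, 6`, so the chords `v₂v₅, v₃v₆, v₄v₇` are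
`i (i + 3)` for `i = 1, 2, 3`. -/
def chordedHeptagon : SimpleGraph (Fin 7) :=
  cycleGraph 7 ⊔ fromRel fun i j => i ∈ ({1, 2, 3} : Finset (Fin 7)) ∧ j = i + 3

instance : DecidableRel chordedHeptagon.Adj :=
  inferInstanceAs (DecidableRel (cycleGraph 7 ⊔ _).Adj)

instance {α : Type*} [DecidableEq α] (G : SimpleGraph α) [DecidableRel G.Adj] :
    DecidableRel (blowUp G).Adj :=
  inferInstanceAs (DecidableRel (fromRel _).Adj)

set_option synthInstance.maxSize 4000 in
lemma wheel_five_free_blowUp_chordedHeptagon : (wheel 5).Free (blowUp chordedHeptagon) :=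
  fun hW => absurd (exists_hub_fourCycle_of_wheel_five_isContained hW) (by decide +kernel)

set_option synthInstance.maxSize 4000 in
lemma wheel_seven_free_compl_blowUp_chordedHeptagon :
    (wheel 7).Free (blowUp chordedHeptagon)ᶜ :=
  fun hW => absurd (exists_hub_sixCycle_of_wheel_seven_isContained hW) (by decide +kernel)

theorem stmt_3 :
    15 ≤ ramseyNumber (wheel 5) (wheel 7) ∧
    ∃ C : SimpleGraph (Fin 14), ¬ Contains C (wheel 5) ∧ ¬ Contains Cᶜ (wheel 7) := by
  have h14 : ¬ RamseyProp 14 (wheel 5) (wheel 7) :=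
    not_ramseyProp_card _ wheel_five_free_blowUp_chordedHeptagon
      wheel_seven_free_compl_blowUp_chordedHeptagon
  refine ⟨le_ramseyNumber ramseyProp_two_pow h14, ?_⟩
  simpa [RamseyProp, not_or] using h14
end

section
/- For n ≥ 5, R(K̂_n, K̂_n) ≤ 4n − 6, where K̂_n = K_1 + P_{n−1} is the kipas on n vertices. -/
/-!
Suppose a colouring of the edges of `K_N`, `N = 4n - 6`, has no monochromatic kipas. Then for every
vertex `u` the red neighbourhood of `u` contains no red path on `n - 1` vertices, so by the
Erdős–Gallai theorem it spans at most `(n - 3) r(u) / 2` red edges, where `r(u)` is the red degree;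
the same holds in blue. Goodman's count of triangles expresses the number of ordered triangles
`N (N - 1) (N - 2)` as the number of monochromatic ones, which by the above is at most
`(n - 3) N (N - 1)`, plus `3 ∑ r(u) b(u) ≤ 3 N (2n - 4) (2n - 3)`. The bound exceeds the total by
`N (n - 1)`: a contradiction.

The Erdős–Gallai bound is proved by induction: a vertex of small degree is deleted, and if all
degrees are at least `(k - 1) / 2`, Dirac's argument turns a longest path into a cycle spanning a
union of components with fewer than `k` vertices.
-/

open SimpleGraph

open Finset

variable {V : Type*}

/-- `p 0, …, p (k - 1)` is a path of `G` through `k` distinct vertices of `S`; the values of `p`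
from `k` on play no role. -/
structure IsPathIn (G : SimpleGraph V) (S : Finset V) (k : ℕ) (p : ℕ → V) : Prop where
  mem : ∀ i < k, p i ∈ S
  injOn : Set.InjOn p (Set.Iio k)
  adj : ∀ i, i + 1 < k → G.Adj (p i) (p (i + 1))

namespace IsPathIn

variable {G : SimpleGraph V} {S T : Finset V} {k : ℕ} {p : ℕ → V}

lemma mono_length (h : IsPathIn G S k p) {j : ℕ} (hj : j ≤ k) : IsPathIn G S j p where
  mem i hi := h.mem i (by omega)
  injOn := h.injOn.mono (Set.Iio_subset_Iio hj)
  adj i hi := h.adj i (by omega)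

lemma mono (h : IsPathIn G S k p) (hST : S ⊆ T) : IsPathIn G T k p :=
  ⟨fun i hi => hST (h.mem i hi), h.injOn, h.adj⟩

lemma cons (h : IsPathIn G S k p) {u : V} (hu : u ∈ S) (hnew : ∀ i < k, p i ≠ u)
    (hadj : G.Adj u (p 0)) : IsPathIn G S (k + 1) (fun i => if i = 0 then u else p (i - 1)) where
  mem i hi := by
    split_ifs
    · exact hu
    · exact h.mem _ (by omega)
  injOn i hi j hj hij := by
    simp only [Set.mem_Iio] at hi hj
    dsimp only at hij
    split_ifs at hij with hi0 hj0 hj0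
    · omega
    · exact absurd hij.symm (hnew _ (by omega))
    · exact absurd hij (hnew _ (by omega))
    · have := h.injOn (show i - 1 < k by omega) (show j - 1 < k by omega) hij
      omega
  adj i hi := by
    rcases i with _ | i
    · simpa using hadj
    · simpa using h.adj i (by omega)

lemma reverse (h : IsPathIn G S k p) : IsPathIn G S k (fun i => p (k - 1 - i)) where
  mem i hi := h.mem _ (by omega)
  injOn i hi j hj hij := by
    simp only [Set.mem_Iio] at hi hj
    have := h.injOn (show k - 1 - i < k by omega) (show k - 1 - j < k by omega) hij
    omega
  adj i hi := by
    have := h.adj (k - 1 - (i + 1)) (by omega)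
    rw [show k - 1 - (i + 1) + 1 = k - 1 - i by omega] at this
    exact this.symm

lemma rotate (h : IsPathIn G S k p) (hc : G.Adj (p (k - 1)) (p 0)) (t : ℕ) :
    IsPathIn G S k (fun i => p ((t + i) % k)) where
  mem i hi := h.mem _ (Nat.mod_lt _ (by omega))
  injOn i hi j hj hij := by
    simp only [Set.mem_Iio] at hi hj
    have hk : 0 < k := by omega
    have := h.injOn (Nat.mod_lt (t + i) hk) (Nat.mod_lt (t + j) hk) hij
    exact Nat.ModEq.eq_of_lt_of_lt (Nat.ModEq.add_left_cancel' t this) hi hj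
  adj i hi := by
    have hm := Nat.mod_lt (t + i) (show 0 < k by omega)
    rw [← Nat.add_assoc, ← Nat.mod_add_mod (t + i)]
    by_cases hlast : (t + i) % k + 1 < k
    · rw [Nat.mod_eq_of_lt hlast]
      exact h.adj _ hlast
    · rw [show (t + i) % k + 1 = k by omega, Nat.mod_self, show (t + i) % k = k - 1 by omega]
      exact hc

/-- The closed path is `p 0, …, p i, p (k - 1), …, p (i + 1)`. -/
lemma exists_closed_of_crossing (h : IsPathIn G S k p) {i : ℕ} (hi : i + 1 < k)
    (hlast : G.Adj (p (k - 1)) (p i)) (hfirst : G.Adj (p 0) (p (i + 1))) :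
    ∃ c, IsPathIn G S k c ∧ G.Adj (c (k - 1)) (c 0) := by
  refine ⟨fun j => p (if j ≤ i then j else k + i - j), ⟨fun j hj => h.mem _ ?_, ?_, ?_⟩, ?_⟩
  · split_ifs <;> omega
  · intro a ha b hb hab
    simp only [Set.mem_Iio] at ha hb
    have := h.injOn (Set.mem_Iio.2 (by split_ifs <;> omega))
      (Set.mem_Iio.2 (by split_ifs <;> omega)) hab
    split_ifs at this <;> omega
  · intro j hj
    by_cases hj1 : j + 1 ≤ i
    · simpa [show j ≤ i by omega, hj1] using h.adj j (by omega)
    by_cases hj0 : j ≤ i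
    · obtain rfl : j = i := by omega
      simpa [hj1, show k + j - (j + 1) = k - 1 by omega] using hlast.symm
    · have := h.adj (k + i - (j + 1)) (by omega)
      rw [show k + i - (j + 1) + 1 = k + i - j by omega] at this
      simpa [hj0, hj1] using this.symm
  · simpa [show ¬ k - 1 ≤ i by omega, show k + i - (k - 1) = i + 1 by omega] using hfirst.symm

lemma exists_succ_of_closed (h : IsPathIn G S k p) (hc : G.Adj (p (k - 1)) (p 0)) {y : V}
    (hy : y ∈ S) (hnew : ∀ i < k, p i ≠ y) {j : ℕ} (hj : j < k) (hadj : G.Adj y (p j)) :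
    ∃ q, IsPathIn G S (k + 1) q := by
  refine ⟨_, (h.rotate hc j).cons hy (fun i _ => hnew _ (Nat.mod_lt _ (by omega))) ?_⟩
  simpa [Nat.mod_eq_of_lt hj] using hadj

lemma exists_eq_of_adj_first (h : IsPathIn G S k p) (hmax : ∀ q, ¬ IsPathIn G S (k + 1) q)
    {y : V} (hy : y ∈ S) (hadj : G.Adj (p 0) y) : ∃ i < k, p i = y := by
  by_contra! hnew
  exact hmax _ (h.cons hy hnew hadj.symm)

lemma exists_eq_of_adj_last (h : IsPathIn G S k p) (hmax : ∀ q, ¬ IsPathIn G S (k + 1) q)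
    {y : V} (hy : y ∈ S) (hadj : G.Adj (p (k - 1)) y) : ∃ i < k, p i = y := by
  obtain ⟨i, hi, rfl⟩ := h.reverse.exists_eq_of_adj_first hmax hy (by simpa using hadj)
  exact ⟨k - 1 - i, by omega, rfl⟩

end IsPathIn

section degIn

variable (G : SimpleGraph V) [DecidableRel G.Adj]

def degIn (S : Finset V) (x : V) : ℕ := #{y ∈ S | G.Adj x y}

variable {G} {S : Finset V} {k : ℕ} {p : ℕ → V}

lemma IsPathIn.degIn_eq_sum [DecidableEq V] (h : IsPathIn G S k p) {x : V}
    (hx : ∀ y ∈ S, G.Adj x y → ∃ i < k, p i = y) :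
    degIn G S x = ∑ i ∈ range k, if G.Adj x (p i) then 1 else 0 := by
  rw [← card_filter, degIn, ← card_image_of_injOn (f := p)]
  · congr 1
    ext y
    simp only [mem_filter, mem_image, mem_range]
    constructor
    · rintro ⟨hy, hxy⟩
      obtain ⟨i, hi, rfl⟩ := hx y hy hxy
      exact ⟨i, ⟨hi, hxy⟩, rfl⟩
    · rintro ⟨i, ⟨hi, hxi⟩, rfl⟩
      exact ⟨h.mem i hi, hxi⟩
  · exact h.injOn.mono fun i hi => by simpa using (mem_filter.1 hi).1

/-- All neighbours of both ends lie on the path, so this is pigeonhole over the `k - 1` positions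
`i`. -/
lemma IsPathIn.exists_crossing [DecidableEq V] (h : IsPathIn G S k p)
    (hmax : ∀ q, ¬ IsPathIn G S (k + 1) q) (hk : 0 < k)
    (hdeg : k ≤ degIn G S (p 0) + degIn G S (p (k - 1))) :
    ∃ i, i + 1 < k ∧ G.Adj (p (k - 1)) (p i) ∧ G.Adj (p 0) (p (i + 1)) := by
  obtain ⟨m, rfl⟩ : ∃ m, k = m + 1 := ⟨k - 1, by omega⟩
  rw [h.degIn_eq_sum fun y hy => h.exists_eq_of_adj_first hmax hy,
    h.degIn_eq_sum fun y hy => h.exists_eq_of_adj_last hmax hy,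
    sum_range_succ', sum_range_succ] at hdeg
  simp only [Nat.add_sub_cancel, SimpleGraph.irrefl, if_false, add_zero,
    ← sum_add_distrib] at hdeg
  obtain ⟨i, hi, hlt⟩ := exists_lt_of_sum_lt (s := range m) (f := fun _ => 1) (by simpa using hdeg)
  refine ⟨i, by simpa using hi, ?_⟩
  simp only [Nat.add_sub_cancel]
  split_ifs at hlt with h1 h2 <;> first | exact ⟨h2, h1⟩ | omega

/-- Dirac's argument: when all degrees are at least `(k - 1) / 2` but there is no path on `k`
vertices, a longest path closes up into a cycle, and no vertex outside this cycle can see it. -/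
lemma exists_closed_of_forall_not_isPathIn [DecidableEq V] (hS : S.Nonempty)
    (hdeg : ∀ x ∈ S, k - 1 ≤ 2 * degIn G S x) (hnp : ∀ p, ¬ IsPathIn G S k p) :
    ∃ X ⊆ S, X.Nonempty ∧ #X < k ∧ ∀ x ∈ X, ∀ y ∈ S, G.Adj x y → y ∈ X := by
  classical
  obtain ⟨x₀, hx₀⟩ := hS
  have hpath1 : ∃ p, IsPathIn G S 1 p :=
    ⟨fun _ => x₀, fun _ _ => hx₀, fun i hi j hj _ => by simp_all, fun i hi => by omega⟩
  have hk : 1 ≤ k := by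
    by_contra hk
    obtain ⟨p, hp⟩ := hpath1
    exact hnp p (hp.mono_length (by omega))
  let P m := ∃ p, IsPathIn G S m p
  set L := Nat.findGreatest P k
  obtain ⟨p, hp⟩ : P L := Nat.findGreatest_spec hk hpath1
  have hL1 : 1 ≤ L := Nat.le_findGreatest hk hpath1
  have hLk : L < k := (Nat.findGreatest_le k).lt_of_ne fun h => hnp p (h ▸ hp)
  have hmax : ∀ q, ¬ IsPathIn G S (L + 1) q := fun q hq =>
    Nat.findGreatest_is_greatest (Nat.lt_succ_self L) hLk ⟨q, hq⟩
  obtain ⟨i, hi, hlast, hfirst⟩ := hp.exists_crossing hmax hL1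
    (by have := hdeg _ (hp.mem 0 hL1); have := hdeg _ (hp.mem (L - 1) (by omega)); omega)
  obtain ⟨c, hc, hclosed⟩ := hp.exists_closed_of_crossing hi hlast hfirst
  refine ⟨(range L).image c, ?_, ⟨c 0, mem_image_of_mem c (by simpa)⟩,
    card_image_le.trans_lt (by simpa), ?_⟩
  · simpa [subset_iff] using hc.mem
  · simp only [mem_image, mem_range, forall_exists_index, and_imp]
    rintro _ j hj rfl y hy hadj
    by_contra! hnew
    obtain ⟨q, hq⟩ := hc.exists_succ_of_closed hclosed hy hnew hj hadj.symm
    exact hmax q hq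

lemma degIn_le_card_sub_one [DecidableEq V] {X : Finset V} {x : V} (hx : x ∈ X) :
    degIn G X x ≤ #X - 1 := by
  rw [← card_erase_of_mem hx]
  exact card_le_card fun y hy => by
    obtain ⟨hyX, hxy⟩ := mem_filter.1 hy
    exact mem_erase.2 ⟨hxy.ne', hyX⟩

lemma sum_degIn_erase [DecidableEq V] {v : V} (hv : v ∈ S) :
    ∑ x ∈ S, degIn G S x = ∑ x ∈ S.erase v, degIn G (S.erase v) x + 2 * degIn G S v := by
  simp only [degIn, card_filter]
  have hcol : ∑ x ∈ S.erase v, (if G.Adj x v then 1 else 0) =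
      ∑ y ∈ S, if G.Adj v y then 1 else 0 := by
    rw [← sum_erase_add _ _ hv]
    simp [G.adj_comm]
  rw [← add_sum_erase _ _ hv,
    sum_congr rfl fun x _ => (add_sum_erase S (fun y => if G.Adj x y then 1 else 0) hv).symm,
    sum_add_distrib, hcol]
  ring

lemma sum_degIn_of_closed [DecidableEq V] {X : Finset V} (hXS : X ⊆ S)
    (hX : ∀ x ∈ X, ∀ y ∈ S, G.Adj x y → y ∈ X) :
    ∑ x ∈ S, degIn G S x = ∑ x ∈ X, degIn G X x + ∑ x ∈ S \ X, degIn G (S \ X) x := by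
  rw [← sum_sdiff hXS, add_comm]
  congr 1 <;> refine sum_congr rfl fun x hx => congrArg card (ext fun y => ?_) <;>
    simp only [mem_filter, mem_sdiff] at hx ⊢
  · exact ⟨fun ⟨hy, hxy⟩ => ⟨hX x hx y hy hxy, hxy⟩, fun ⟨hy, hxy⟩ => ⟨hXS hy, hxy⟩⟩
  · exact ⟨fun ⟨hy, hxy⟩ => ⟨⟨hy, fun hyX => hx.2 (hX y hyX x hx.1 hxy.symm)⟩, hxy⟩,
      fun ⟨hy, hxy⟩ => ⟨hy.1, hxy⟩⟩

/-- The Erdős–Gallai theorem for paths. -/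
theorem sum_degIn_le_of_forall_not_isPathIn [DecidableEq V] (hnp : ∀ p, ¬ IsPathIn G S k p) :
    ∑ x ∈ S, degIn G S x ≤ (k - 2) * #S := by
  induction S using Finset.strongInduction with
  | H S ih =>
  rcases S.eq_empty_or_nonempty with rfl | hS
  · simp
  by_cases hlow : ∃ v ∈ S, 2 * degIn G S v ≤ k - 2
  · obtain ⟨v, hv, hdv⟩ := hlow
    have hrest := ih _ (erase_ssubset hv) fun p hp => hnp p (hp.mono (erase_subset v S))
    rw [sum_degIn_erase hv, ← card_erase_add_one hv, mul_add_one]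
    omega
  · push Not at hlow
    obtain ⟨X, hXS, hXne, hXk, hXcl⟩ :=
      exists_closed_of_forall_not_isPathIn hS (fun x hx => by have := hlow x hx; omega) hnp
    have hXsum : ∑ x ∈ X, degIn G X x ≤ (k - 2) * #X := by
      rw [mul_comm, ← smul_eq_mul, ← sum_const]
      exact sum_le_sum fun x hx => (degIn_le_card_sub_one hx).trans (by omega)
    have hrest := ih _ (sdiff_ssubset hXS hXne) fun p hp => hnp p (hp.mono sdiff_subset)
    rw [sum_degIn_of_closed hXS hXcl, ← Nat.sub_add_cancel (card_le_card hXS), mul_add,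
      ← card_sdiff_of_subset hXS]
    omega

end degIn

section Kipas

variable {β : Type*} {G : SimpleGraph V}

lemma contains_graphJoin_bot {H : SimpleGraph β} (f : H →g G) (hf : Function.Injective f) {u : V}
    (hu : ∀ b, G.Adj u (f b)) : Contains G (graphJoin (⊥ : SimpleGraph (Fin 1)) H) := by
  refine ⟨⟨Sum.elim (fun _ => u) f, ?_⟩, ?_⟩
  · rintro (a | a) (b | b) hab <;> simp only [graphJoin, fromRel_adj] at hab
    · simp at hab
    · exact hu b
    · exact (hu a).symm
    · exact f.map_adj (hab.2.elim id fun h => h.symm)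
  · rintro (a | a) (b | b) hab
    · simp [Subsingleton.elim a b]
    · exact absurd hab (hu b).ne
    · exact absurd hab.symm (hu a).ne
    · simp [hf hab]

lemma IsPathIn.exists_hom_pathGraph {S : Finset V} {k : ℕ} {p : ℕ → V} (h : IsPathIn G S k p) :
    ∃ f : pathGraph k →g G, Function.Injective f ∧ ∀ i, f i ∈ S := by
  refine ⟨⟨fun i => p i, fun {i j} hij => ?_⟩, fun i j hij => Fin.ext (h.injOn i.2 j.2 hij),
    fun i => h.mem i i.2⟩
  rcases pathGraph_adj.1 hij with hij | hij
  · simpa [← hij] using h.adj i (by omega)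
  · simpa [← hij] using (h.adj j (by omega)).symm

lemma IsPathIn.contains_kipas {S : Finset V} {n : ℕ} {p : ℕ → V} (h : IsPathIn G S (n - 1) p)
    {u : V} (hu : ∀ x ∈ S, G.Adj u x) : Contains G (kipas n) := by
  obtain ⟨f, hf, hfS⟩ := h.exists_hom_pathGraph
  exact contains_graphJoin_bot f hf fun i => hu _ (hfS i)

lemma sum_degIn_neighborFinset_le [Fintype V] [DecidableEq V] [DecidableRel G.Adj] {n : ℕ}
    (hG : ¬ Contains G (kipas n)) (u : V) :
    ∑ x ∈ G.neighborFinset u, degIn G (G.neighborFinset u) x ≤ (n - 3) * G.degree u := by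
  rw [← card_neighborFinset_eq_degree, show n - 3 = n - 1 - 2 by omega]
  exact sum_degIn_le_of_forall_not_isPathIn fun p hp =>
    hG (hp.contains_kipas fun x hx => (mem_neighborFinset G u x).1 hx)

end Kipas

section Goodman

variable [Fintype V] [DecidableEq V] (G : SimpleGraph V) [DecidableRel G.Adj]

def bichromaticAt (a b c : V) : ℕ :=
  (if G.Adj a b ∧ Gᶜ.Adj a c then 1 else 0) + (if Gᶜ.Adj a b ∧ G.Adj a c then 1 else 0)

omit [Fintype V] in
/-- A triangle that is not monochromatic has exactly two vertices at which its two edges get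
different colours. -/
lemma two_mul_ite_ne_eq (a b c : V) :
    2 * (if a ≠ b ∧ a ≠ c ∧ b ≠ c then 1 else 0) =
      2 * (if G.Adj a b ∧ G.Adj a c ∧ G.Adj b c then 1 else 0) +
      2 * (if Gᶜ.Adj a b ∧ Gᶜ.Adj a c ∧ Gᶜ.Adj b c then 1 else 0) +
      bichromaticAt G a b c + bichromaticAt G b c a + bichromaticAt G c a b := by
  simp only [bichromaticAt, compl_adj, G.adj_comm b a, G.adj_comm c a, G.adj_comm c b]
  rcases eq_or_ne a b with rfl | hab
  · by_cases h : G.Adj a c <;> simp [h]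
  rcases eq_or_ne a c with rfl | hac
  · by_cases h : G.Adj a b <;> simp [h, G.adj_comm]
  rcases eq_or_ne b c with rfl | hbc
  · by_cases h : G.Adj a b <;> simp [h]
  simp only [ne_eq, hab, hac, hbc, hab.symm, hac.symm, hbc.symm, not_false_eq_true, true_and,
    and_true]
  by_cases h1 : G.Adj a b <;> by_cases h2 : G.Adj a c <;> by_cases h3 : G.Adj b c <;>
    simp [h1, h2, h3]

omit [DecidableEq V] in
lemma sum_sum_sum_rotate {M : Type*} [AddCommMonoid M] (f : V → V → V → M) :
    ∑ a, ∑ b, ∑ c, f b c a = ∑ a, ∑ b, ∑ c, f a b c := by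
  rw [sum_comm]
  exact sum_congr rfl fun _ _ => sum_comm

omit [DecidableEq V] in
lemma sum_sum_ite_adj_and_adj_and_adj (a : V) :
    ∑ b, ∑ c, (if G.Adj a b ∧ G.Adj a c ∧ G.Adj b c then 1 else 0) =
      ∑ x ∈ G.neighborFinset a, degIn G (G.neighborFinset a) x := by
  simp only [degIn, neighborFinset_eq_filter, card_filter, sum_filter, ite_and, sum_ite_irrel,
    sum_const_zero]

lemma sum_sum_bichromaticAt (a : V) :
    ∑ b, ∑ c, bichromaticAt G a b c = 2 * (G.degree a * Gᶜ.degree a) := by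
  have key : ∀ H : SimpleGraph V, [DecidableRel H.Adj] → ∀ H' : SimpleGraph V,
      [DecidableRel H'.Adj] →
      ∑ b, ∑ c, (if H.Adj a b ∧ H'.Adj a c then 1 else 0) = H.degree a * H'.degree a := by
    intro H _ H' _
    simp only [← card_neighborFinset_eq_degree, neighborFinset_eq_filter, card_filter,
      sum_mul_sum, ite_and, ite_zero_mul_ite_zero, mul_one]
  simp only [bichromaticAt, sum_add_distrib, key]
  ring

lemma sum_sum_sum_ite_ne :
    ∑ a : V, ∑ b : V, ∑ c : V, (if a ≠ b ∧ a ≠ c ∧ b ≠ c then 1 else 0) =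
      Fintype.card V * (Fintype.card V - 1) * (Fintype.card V - 2) := by
  have hpair : ∀ x y : V, x ≠ y →
      ∑ z, (if x ≠ z ∧ y ≠ z then 1 else 0) = Fintype.card V - 2 := by
    intro x y hxy
    rw [← card_filter, show ({z | x ≠ z ∧ y ≠ z} : Finset V) = (univ.erase x).erase y by
      ext; simp [ne_comm, and_comm], card_erase_of_mem (by simpa using hxy.symm),
      card_erase_of_mem (mem_univ x), card_univ, Nat.sub_sub]
  calc _ = ∑ x : V, ∑ y : V, if x ≠ y then Fintype.card V - 2 else 0 := by
        refine sum_congr rfl fun x _ => sum_congr rfl fun y _ => ?_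
        split_ifs with hxy
        · rw [← hpair x y hxy]
          simp [hxy]
        · simp [hxy]
    _ = _ := by
        simp [sum_ite, filter_ne, card_erase_of_mem]
        ring

/-- Goodman's count of the ordered triangles of `K_N` coloured by `G` and `Gᶜ`; the first sum
counts the monochromatic ones. -/
theorem sum_add_three_mul_sum_degree_mul_degree_compl :
    ∑ a, (∑ x ∈ G.neighborFinset a, degIn G (G.neighborFinset a) x +
        ∑ x ∈ Gᶜ.neighborFinset a, degIn Gᶜ (Gᶜ.neighborFinset a) x) +
      3 * ∑ a, G.degree a * Gᶜ.degree a =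
      Fintype.card V * (Fintype.card V - 1) * (Fintype.card V - 2) := by
  have h := sum_congr rfl fun a (_ : a ∈ univ) => sum_congr rfl fun b (_ : b ∈ univ) =>
    sum_congr rfl fun c (_ : c ∈ univ) => two_mul_ite_ne_eq G a b c
  have hrot₁ : ∑ a, ∑ b, ∑ c, bichromaticAt G b c a = ∑ a, ∑ b, ∑ c, bichromaticAt G a b c :=
    sum_sum_sum_rotate _
  have hrot₂ : ∑ a, ∑ b, ∑ c, bichromaticAt G c a b = ∑ a, ∑ b, ∑ c, bichromaticAt G a b c :=
    (sum_sum_sum_rotate fun x y z => bichromaticAt G z x y).symm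
  simp only [← mul_sum, sum_add_distrib, sum_sum_sum_ite_ne, hrot₁, hrot₂,
    sum_sum_ite_adj_and_adj_and_adj, sum_sum_bichromaticAt] at h
  rw [sum_add_distrib]
  omega

end Goodman

lemma mul_le_of_add_eq_two_mul_add_one {x y c : ℕ} (h : x + y = 2 * c + 1) :
    x * y ≤ c * (c + 1) := by
  rcases le_or_gt x c with hx | hx <;> nlinarith

theorem ramseyProp_kipas {n : ℕ} (hn : 3 ≤ n) : RamseyProp (4 * n - 6) (kipas n) (kipas n) := by
  classical
  intro C
  by_contra! ⟨hred, hblue⟩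
  have hdeg (a : Fin (4 * n - 6)) : C.degree a + Cᶜ.degree a = 2 * (2 * n - 4) + 1 := by
    have := C.degree_lt_card_verts a
    rw [degree_compl, Fintype.card_fin] at *
    omega
  have hmono : ∑ a, (∑ x ∈ C.neighborFinset a, degIn C (C.neighborFinset a) x +
      ∑ x ∈ Cᶜ.neighborFinset a, degIn Cᶜ (Cᶜ.neighborFinset a) x) ≤
      (4 * n - 6) * ((n - 3) * (2 * (2 * n - 4) + 1)) := by
    refine (sum_le_card_nsmul _ _ ((n - 3) * (2 * (2 * n - 4) + 1)) fun a _ => ?_).trans_eq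
      (by simp)
    rw [← hdeg a, mul_add]
    exact add_le_add (sum_degIn_neighborFinset_le hred a) (sum_degIn_neighborFinset_le hblue a)
  have hmixed : ∑ a, C.degree a * Cᶜ.degree a ≤ (4 * n - 6) * ((2 * n - 4) * (2 * n - 4 + 1)) :=
    (sum_le_card_nsmul _ _ _ fun a _ => mul_le_of_add_eq_two_mul_add_one (hdeg a)).trans_eq
      (by simp)
  have hgoodman := sum_add_three_mul_sum_degree_mul_degree_compl C
  rw [Fintype.card_fin] at hgoodman
  obtain ⟨m, rfl⟩ : ∃ m, n = m + 3 := ⟨n - 3, by omega⟩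
  simp only [show 4 * (m + 3) - 6 = 4 * m + 6 by omega, show m + 3 - 3 = m by omega,
    show 2 * (m + 3) - 4 = 2 * m + 2 by omega, show 4 * m + 6 - 1 = 4 * m + 5 by omega,
    show 4 * m + 6 - 2 = 4 * m + 4 by omega] at hmono hmixed hgoodman
  nlinarith

theorem stmt_11 (n : ℕ) (hn : 5 ≤ n) :
    ramseyNumber (kipas n) (kipas n) ≤ 4 * n - 6 :=
  Nat.sInf_le (ramseyProp_kipas (by omega))
end

section
/- For every m ≥ 1, the graph K_{2m+1} ∪ K_{m,m,m} on 5m+1 vertices and its complement both fail to contain the kipas K̂_{2m+2} = K_1 + P_{2m+1} as a subgraph; hence R(K̂_{2m+2}, K̂_{2m+2}) ≥ 5m + 2. -/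
open SimpleGraph

/-- The disjoint union of two graphs. -/
def disjUnion {α β : Type*} (G : SimpleGraph α) (H : SimpleGraph β) :
    SimpleGraph (α ⊕ β) :=
  SimpleGraph.fromRel (fun x y =>
    match x, y with
    | Sum.inl a, Sum.inl b => G.Adj a b
    | Sum.inr a, Sum.inr b => H.Adj a b
    | _, _ => False)

/-- The graph K_{2m+1} ∪ K_{m,m,m}. -/
def G12 (m : ℕ) : SimpleGraph (Fin (2 * m + 1) ⊕ (Σ _i : Fin 3, Fin m)) :=
  disjUnion (⊤ : SimpleGraph (Fin (2 * m + 1)))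
    (completeMultipartiteGraph (fun _ : Fin 3 => Fin m))

section Aux
open Sum

variable {m n : ℕ}

lemma kipas_adj_inl_inr (a : Fin 1) (j : Fin (n-1)) : (kipas n).Adj (inl a) (inr j) := by
  simp [kipas, graphJoin, fromRel_adj]

lemma kipas_adj_inr_inr {j k : Fin (n-1)} :
    (kipas n).Adj (inr j) (inr k) ↔ (pathGraph (n-1)).Adj j k := by
  constructor
  · rintro ⟨hne, h | h⟩
    · exact h
    · exact h.symm
  · intro h
    exact ⟨fun e => h.ne (by injection e), Or.inl h⟩

lemma G12_adj_inl_inl {a b : Fin (2*m+1)} : (G12 m).Adj (inl a) (inl b) ↔ a ≠ b := by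
  constructor
  · rintro ⟨hne, _⟩
    exact fun e => hne (by rw [e])
  · intro h
    exact ⟨fun e => h (by injection e), Or.inl (by simpa using h)⟩

lemma G12_not_adj_inl_inr {a : Fin (2*m+1)} {q : Σ _ : Fin 3, Fin m} :
    ¬ (G12 m).Adj (inl a) (inr q) := by
  rintro ⟨hne, h | h⟩ <;> exact h

lemma G12_adj_inr_inr {p q : Σ _ : Fin 3, Fin m} :
    (G12 m).Adj (inr p) (inr q) ↔ p.1 ≠ q.1 := by
  constructor
  · rintro ⟨hne, h | h⟩
    · exact h
    · exact (Ne.symm h)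
  · intro h
    exact ⟨fun e => h (by injection e with e'; rw [e']), Or.inl h⟩

end Aux
section Aux2
open Sum

variable {m : ℕ}

lemma G12c_not_adj_inl_inl {a b : Fin (2*m+1)} : ¬ (G12 m)ᶜ.Adj (inl a) (inl b) := by
  rw [compl_adj]
  rintro ⟨hne, hna⟩
  exact hna (G12_adj_inl_inl.mpr (fun e => hne (by rw [e])))

lemma G12c_adj_inr_inr {p q : Σ _ : Fin 3, Fin m} :
    (G12 m)ᶜ.Adj (inr p) (inr q) ↔ p ≠ q ∧ p.1 = q.1 := by
  rw [compl_adj, G12_adj_inr_inr]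
  constructor
  · rintro ⟨hne, h⟩
    exact ⟨fun e => hne (by rw [e]), not_not.mp h⟩
  · rintro ⟨hne, h⟩
    exact ⟨fun e => hne (by injection e), not_not.mpr h⟩

lemma not_contains_G12 (m : ℕ) (hm : 1 ≤ m) : ¬ Contains (G12 m) (kipas (2*m+2)) := by
  rintro ⟨f, hf⟩
  have key : ∀ j : Fin (2*m+2-1), (G12 m).Adj (f (inl 0)) (f (inr j)) :=
    fun j => f.map_adj (kipas_adj_inl_inr 0 j)
  cases hh : f (inl 0) with
  | inl a =>
    have hex : ∀ j : Fin (2*m+2-1), ∃ b : Fin (2*m+1), b ≠ a ∧ f (inr j) = inl b := by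
      intro j
      have h := key j; rw [hh] at h
      cases hj : f (inr j) with
      | inl b =>
        rw [hj] at h
        exact ⟨b, (G12_adj_inl_inl.mp h).symm, rfl⟩
      | inr q => rw [hj] at h; exact absurd h G12_not_adj_inl_inr
    choose b hb hfb using hex
    have hbinj : Function.Injective fun j => (⟨b j, hb j⟩ : {x : Fin (2*m+1) // x ≠ a}) := by
      intro j j' h
      have h1 : b j = b j' := congrArg Subtype.val h
      have h2 : f (inr j) = f (inr j') := by rw [hfb, hfb, h1]
      exact Sum.inr_injective (hf h2)
    have hcard := Fintype.card_le_of_injective _ hbinj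
    have hsub : Fintype.card {x : Fin (2*m+1) // x ≠ a} = 2*m := by
      simp [Fintype.card_subtype_compl]
    rw [hsub] at hcard
    simp only [Fintype.card_fin] at hcard
    omega
  | inr p =>
    have hex : ∀ j : Fin (2*m+2-1), ∃ q : Σ _ : Fin 3, Fin m, q.1 ≠ p.1 ∧ f (inr j) = inr q := by
      intro j
      have h := key j; rw [hh] at h
      cases hj : f (inr j) with
      | inl b => rw [hj] at h; exact absurd h.symm G12_not_adj_inl_inr
      | inr q =>
        rw [hj] at h
        exact ⟨q, (G12_adj_inr_inr.mp h).symm, rfl⟩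
    choose q hq hfq using hex
    have hinj : Function.Injective
        (fun j => ((⟨(q j).1, hq j⟩, (q j).2) : {i : Fin 3 // i ≠ p.1} × Fin m)) := by
      intro j j' h
      have h1 : (q j).1 = (q j').1 := congrArg (fun x => (Prod.fst x).val) h
      have h2 : (q j).2 = (q j').2 := congrArg Prod.snd h
      have h3 : q j = q j' := Sigma.ext h1 (heq_of_eq h2)
      have h4 : f (inr j) = f (inr j') := by rw [hfq, hfq, h3]
      exact Sum.inr_injective (hf h4)
    have hcard := Fintype.card_le_of_injective _ hinj
    have hsub : Fintype.card ({i : Fin 3 // i ≠ p.1} × Fin m) = 2*m := by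
      simp [Fintype.card_subtype_compl]
    rw [hsub] at hcard
    simp only [Fintype.card_fin] at hcard
    omega

lemma not_contains_G12c (m : ℕ) (hm : 1 ≤ m) : ¬ Contains (G12 m)ᶜ (kipas (2*m+2)) := by
  classical
  rintro ⟨f, hf⟩
  have key : ∀ j : Fin (2*m+2-1), (G12 m)ᶜ.Adj (f (inl 0)) (f (inr j)) :=
    fun j => f.map_adj (kipas_adj_inl_inr 0 j)
  have key2 : ∀ j k : Fin (2*m+2-1), (pathGraph (2*m+2-1)).Adj j k →
      (G12 m)ᶜ.Adj (f (inr j)) (f (inr k)) :=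
    fun j k h => f.map_adj (kipas_adj_inr_inr.mpr h)
  cases hh : f (inl 0) with
  | inl a =>
    have hex : ∀ j : Fin (2*m+2-1), ∃ q : Σ _ : Fin 3, Fin m, f (inr j) = inr q := by
      intro j
      have h := key j; rw [hh] at h
      cases hj : f (inr j) with
      | inl b => rw [hj] at h; exact absurd h G12c_not_adj_inl_inl
      | inr q => exact ⟨q, rfl⟩
    choose q hfq using hex
    have h0 : (0 : ℕ) < 2*m+2-1 := by omega
    have hconst : ∀ j : Fin (2*m+2-1), (q j).1 = (q ⟨0, h0⟩).1 := by
      rintro ⟨jv, hjv⟩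
      induction jv with
      | zero => rfl
      | succ k ih =>
        have hk : k < 2*m+2-1 := by omega
        have hadj : (pathGraph (2*m+2-1)).Adj ⟨k, hk⟩ ⟨k+1, hjv⟩ := by
          rw [pathGraph_adj]; left; rfl
        have h := key2 _ _ hadj
        rw [hfq, hfq] at h
        have h2 := (G12c_adj_inr_inr.mp h).2
        rw [← h2]; exact ih hk
    have hinj : Function.Injective (fun j : Fin (2*m+2-1) => (q j).2) := by
      intro j j' h
      have h1 : (q j).1 = (q j').1 := by rw [hconst j, hconst j']
      have h3 : q j = q j' := Sigma.ext h1 (heq_of_eq h)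
      have h4 : f (inr j) = f (inr j') := by rw [hfq, hfq, h3]
      exact Sum.inr_injective (hf h4)
    have hcard := Fintype.card_le_of_injective _ hinj
    simp only [Fintype.card_fin] at hcard
    omega
  | inr p =>
    obtain ⟨pi, py⟩ := p
    set T : Finset (Fin (2*m+2-1)) :=
      Finset.univ.filter (fun j => ∃ a, f (inr j) = inl a) with hT
    -- Step A : lower bound on T.card
    have hex : ∀ j : {j : Fin (2*m+2-1) // j ∉ T}, ∃ y : Fin m, y ≠ py ∧
        f (inr j.val) = inr ⟨pi, y⟩ := by
      rintro ⟨j, hj⟩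
      have hnl : ¬ ∃ a, f (inr j) = inl a := by
        simpa [hT] using hj
      have h := key j; rw [hh] at h
      cases hj' : f (inr j) with
      | inl b => exact absurd ⟨b, hj'⟩ hnl
      | inr qq =>
        rw [hj'] at h
        obtain ⟨hne, h1⟩ := G12c_adj_inr_inr.mp h
        obtain ⟨i, y⟩ := qq
        simp only at h1
        subst h1
        refine ⟨y, fun e => hne ?_, rfl⟩
        rw [e]
    choose y hy hfy using hex
    have hinjA : Function.Injective (fun j => (⟨y j, hy j⟩ : {y : Fin m // y ≠ py})) := by
      intro j j' h
      have h1 : y j = y j' := congrArg Subtype.val h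
      have h2 : f (inr j.val) = f (inr j'.val) := by
        rw [hfy, hfy, h1]
      exact Subtype.ext (Sum.inr_injective (hf h2))
    have hcardA := Fintype.card_le_of_injective _ hinjA
    have e1 : Fintype.card {j : Fin (2*m+2-1) // j ∉ T} = (2*m+2-1) - T.card := by
      rw [Fintype.card_subtype_compl]
      simp
    have e2 : Fintype.card {y : Fin m // y ≠ py} = m - 1 := by
      simp [Fintype.card_subtype_compl]
    rw [e1, e2] at hcardA
    have hTle : T.card ≤ 2*m+2-1 := by simpa using Finset.card_le_univ T
    -- Step B : upper bound on T.card
    have hinjB : Set.InjOn (fun j : Fin (2*m+2-1) => (⟨j.val / 2, by omega⟩ : Fin (m+1))) T := by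
      intro j hj j' hj' hg
      by_contra hne
      have hvne : j.val ≠ j'.val := fun e => hne (Fin.val_injective e)
      have hgval : j.val / 2 = j'.val / 2 := congrArg Fin.val hg
      have hadj : (pathGraph (2*m+2-1)).Adj j j' := by
        rw [pathGraph_adj]; omega
      have h := key2 _ _ hadj
      obtain ⟨a, ha⟩ : ∃ a, f (inr j) = inl a := by simpa [hT] using hj
      obtain ⟨a', ha'⟩ : ∃ a, f (inr j') = inl a := by simpa [hT] using hj'
      rw [ha, ha'] at h
      exact G12c_not_adj_inl_inl h
    have hcardB : T.card ≤ m + 1 := by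
      have := Finset.card_le_card_of_injOn _ (fun x _ => Finset.mem_univ _) hinjB
      simpa using this
    omega
end Aux2
section Aux3
open Sum

lemma ramsey_aux : ∀ s t : ℕ, ∃ N : ℕ, ∀ (V : Type) (G : SimpleGraph V) (A : Finset V),
    N ≤ A.card → (∃ B ⊆ A, B.card = s ∧ G.IsClique ↑B) ∨
      (∃ B ⊆ A, B.card = t ∧ Gᶜ.IsClique ↑B) := by
  intro s
  induction s with
  | zero => exact fun t => ⟨0, fun V G A _ => Or.inl ⟨∅, by simp, by simp, by simp⟩⟩
  | succ s ihs =>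
    intro t
    induction t with
    | zero => exact ⟨0, fun V G A _ => Or.inr ⟨∅, by simp, by simp, by simp⟩⟩
    | succ t iht =>
      obtain ⟨N₁, h₁⟩ := ihs (t+1)
      obtain ⟨N₂, h₂⟩ := iht
      refine ⟨N₁ + N₂ + 1, ?_⟩
      intro V G A hA
      classical
      obtain ⟨x, hx⟩ : ∃ x, x ∈ A := Finset.card_pos.mp (by omega)
      set P := (A.erase x).filter (fun y => G.Adj x y) with hPdef
      set Q := (A.erase x).filter (fun y => ¬ G.Adj x y) with hQdef
      have hPQ : P.card + Q.card = (A.erase x).card :=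
        Finset.card_filter_add_card_filter_not _
      have hAe : (A.erase x).card = A.card - 1 := Finset.card_erase_of_mem hx
      have hcases : N₁ ≤ P.card ∨ N₂ ≤ Q.card := by omega
      have hPsub : P ⊆ A.erase x := Finset.filter_subset _ _
      have hQsub : Q ⊆ A.erase x := Finset.filter_subset _ _
      rcases hcases with hP | hQ
      · rcases h₁ V G P hP with ⟨B, hBP, hBcard, hBcl⟩ | ⟨B, hBP, hBcard, hBcl⟩
        · refine Or.inl ⟨insert x B, ?_, ?_, ?_⟩
          · intro y hy
            rcases Finset.mem_insert.mp hy with h | h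
            · rwa [h]
            · exact Finset.mem_of_mem_erase (hPsub (hBP h))
          · rw [Finset.card_insert_of_notMem
              (fun hxB => Finset.notMem_erase x A (hPsub (hBP hxB))), hBcard]
          · rw [Finset.coe_insert]
            refine hBcl.insert (fun b hb _ => ?_)
            exact (Finset.mem_filter.mp (hBP hb)).2
        · exact Or.inr ⟨B, fun y hy => Finset.mem_of_mem_erase (hPsub (hBP hy)),
            hBcard, hBcl⟩
      · rcases h₂ V G Q hQ with ⟨B, hBP, hBcard, hBcl⟩ | ⟨B, hBP, hBcard, hBcl⟩
        · exact Or.inl ⟨B, fun y hy => Finset.mem_of_mem_erase (hQsub (hBP hy)),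
            hBcard, hBcl⟩
        · refine Or.inr ⟨insert x B, ?_, ?_, ?_⟩
          · intro y hy
            rcases Finset.mem_insert.mp hy with h | h
            · rwa [h]
            · exact Finset.mem_of_mem_erase (hQsub (hBP h))
          · rw [Finset.card_insert_of_notMem
              (fun hxB => Finset.notMem_erase x A (hQsub (hBP hxB))), hBcard]
          · rw [Finset.coe_insert]
            refine hBcl.insert (fun b hb hne => ?_)
            have hb' := Finset.mem_filter.mp (hBP hb)
            exact (compl_adj _ _ _).mpr ⟨hne, hb'.2⟩

lemma contains_kipas_of_clique {α : Type} (C : SimpleGraph α) (m : ℕ) (B : Finset α)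
    (hcard : B.card = 2*m+2) (hcl : C.IsClique ↑B) : Contains C (kipas (2*m+2)) := by
  have hc : Fintype.card (Fin 1 ⊕ Fin (2*m+2-1)) = Fintype.card {x // x ∈ B} := by
    simp [hcard]
    omega
  let e := Fintype.equivOfCardEq hc
  refine ⟨⟨fun v => (e v).val, ?_⟩, ?_⟩
  · intro a b hab
    exact hcl (e a).2 (e b).2 (fun h => hab.ne (e.injective (Subtype.ext h)))
  · intro a b h
    exact e.injective (Subtype.ext h)

lemma ramsey_exists (m : ℕ) :
    ∃ N, RamseyProp N (kipas (2*m+2)) (kipas (2*m+2)) := by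
  obtain ⟨N, hN⟩ := ramsey_aux (2*m+2) (2*m+2)
  refine ⟨N + (2*m+2), fun C => ?_⟩
  rcases hN (Fin (N + (2*m+2))) C Finset.univ (by simp) with ⟨B, _, hBcard, hBcl⟩ |
      ⟨B, _, hBcard, hBcl⟩
  · exact Or.inl (contains_kipas_of_clique C m B hBcard hBcl)
  · exact Or.inr (contains_kipas_of_clique Cᶜ m B hBcard hBcl)

end Aux3
section Main
open Sum

lemma ramsey_lower (m : ℕ) (hm : 1 ≤ m) (N : ℕ)
    (hN : RamseyProp N (kipas (2*m+2)) (kipas (2*m+2))) : 5*m+2 ≤ N := by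
  by_contra hlt
  push_neg at hlt
  have hcV : Fintype.card (Fin (2 * m + 1) ⊕ (Σ _i : Fin 3, Fin m)) = 5*m+1 := by
    simp
    omega
  let e := Fintype.equivFinOfCardEq hcV
  let ι : Fin N → (Fin (2 * m + 1) ⊕ (Σ _i : Fin 3, Fin m)) :=
    fun i => e.symm (Fin.castLE (by omega) i)
  have hι : Function.Injective ι :=
    fun a b h => Fin.castLE_injective _ (e.symm.injective h)
  rcases hN ((G12 m).comap ι) with ⟨g, hg⟩ | ⟨g, hg⟩
  · refine not_contains_G12 m hm ⟨⟨fun v => ι (g v), fun hadj => ?_⟩, hι.comp hg⟩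
    exact g.map_adj hadj
  · refine not_contains_G12c m hm ⟨⟨fun v => ι (g v), fun {a b} hadj => ?_⟩, hι.comp hg⟩
    have h := g.map_adj hadj
    rw [compl_adj] at h ⊢
    exact ⟨fun hh => h.1 (hι hh), h.2⟩

end Main

theorem stmt_12 (m : ℕ) (hm : 1 ≤ m) :
    ¬ Contains (G12 m) (kipas (2 * m + 2)) ∧
    ¬ Contains (G12 m)ᶜ (kipas (2 * m + 2)) ∧
    5 * m + 2 ≤ ramseyNumber (kipas (2 * m + 2)) (kipas (2 * m + 2)) := by
  refine ⟨not_contains_G12 m hm, not_contains_G12c m hm, ?_⟩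
  obtain ⟨N₀, hN₀⟩ := ramsey_exists m
  have hne : {N | RamseyProp N (kipas (2*m+2)) (kipas (2*m+2))}.Nonempty := ⟨N₀, hN₀⟩
  exact ramsey_lower m hm _ (Nat.sInf_mem hne)
end
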